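/- arXiv:2102.04330 — 4 statements merged into one kernel-verified Lean document; each statement's English description precedes it below -/
import Mathlib

section
/- The Stieltjes transform of the semicircle distribution, m_sc(z) = ∫ ρ_sc(x)/(x - z) dx where ρ_sc(x) = (1/(2π))√(max(4 - x², 0)), satisfies the self-consistent equation 1 + z·m_sc(z) + m_sc(z)² = 0 for every z in the upper half-plane. -/
/-!
Let `W` be a square root of `4 - z²` with `0 ≤ Re W`. On `[-2, 2]` the function
`√(4 - x²) - z arcsin (x / 2) - W (log (4 - z x + W √(4 - x²)) - log (x - z))`
is a primitive of `√(4 - x²) / (x - z)`; the sign condition on `W` keeps the argument of the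
first logarithm off the branch cut. Evaluating at `±2` gives `∫ √(4 - x²) / (x - z) = π (i W - z)`,
so `m_sc(z) = (i W - z) / 2`, a root of `m² + z m + 1` because `(i W)² = z² - 4`.
-/

open MeasureTheory

/-- The semicircle density `ρ_sc(x) = (1/(2π))·√(max(4 - x², 0))`. -/
noncomputable def rhoSC (x : ℝ) : ℝ := (1 / (2 * Real.pi)) * Real.sqrt (max (4 - x ^ 2) 0)

/-- The Stieltjes transform of the semicircle distribution. -/
noncomputable def mSC (z : ℂ) : ℂ := ∫ x : ℝ, (rhoSC x : ℂ) / ((x : ℂ) - z)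

open Complex Set
open scoped Real

lemma Real.sqrt_max_zero (x : ℝ) : √(max x 0) = √x := by
  rcases le_total x 0 with h | h
  · rw [max_eq_right h, Real.sqrt_zero, Real.sqrt_eq_zero'.2 h]
  · rw [max_eq_left h]

lemma Real.hasDerivAt_sqrt_sub_sq {c x : ℝ} (hx : x ^ 2 < c) :
    HasDerivAt (fun y => √(c - y ^ 2)) (-x / √(c - x ^ 2)) x := by
  have hpos : 0 < √(c - x ^ 2) := Real.sqrt_pos.2 (by linarith)
  refine (((hasDerivAt_pow 2 x).const_sub c).sqrt (by positivity)).congr_deriv ?_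
  field_simp
  ring

lemma Real.hasDerivAt_arcsin_div {r x : ℝ} (hr : 0 < r) (hx : x ^ 2 < r ^ 2) :
    HasDerivAt (fun y => Real.arcsin (y / r)) (1 / √(r ^ 2 - x ^ 2)) x := by
  have h₁ : x / r ≠ -1 := by
    intro h; rw [div_eq_iff hr.ne'] at h; subst h; nlinarith
  have h₂ : x / r ≠ 1 := by
    intro h; rw [div_eq_iff hr.ne'] at h; subst h; nlinarith
  refine ((Real.hasDerivAt_arcsin h₁ h₂).comp x ((hasDerivAt_id x).div_const r)).congr_deriv ?_
  rw [show 1 - (x / r) ^ 2 = (r ^ 2 - x ^ 2) / r ^ 2 by field_simp,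
    Real.sqrt_div' _ (by positivity), Real.sqrt_sq hr.le]
  field_simp

lemma Complex.exists_sq_eq_and_re_nonneg (u : ℂ) : ∃ w : ℂ, w ^ 2 = u ∧ 0 ≤ w.re :=
  ⟨u ^ (2⁻¹ : ℂ), cpow_ofNat_inv_pow u 2, by rw [cpow_inv_two_re]; exact Real.sqrt_nonneg _⟩

lemma Complex.log_neg_of_im_pos {u : ℂ} (hu : 0 < u.im) : log (-u) = log u - π * I := by
  refine Complex.ext ?_ ?_
  · simp [log_re]
  · simp [log_im, arg_neg_eq_arg_sub_pi_of_im_pos hu]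

lemma stieltjesPrimitive_deriv_identity {K : Type*} [Field K] {x z s W : K} (hs : s ≠ 0)
    (hxz : x - z ≠ 0) (hN : 4 - z * x + W * s ≠ 0) (hs2 : s ^ 2 = 4 - x ^ 2)
    (hW2 : W ^ 2 = 4 - z ^ 2) :
    -x / s - z / s - W * ((-z - W * x / s) / (4 - z * x + W * s) - 1 / (x - z)) =
      s / (x - z) := by
  have hlog : (-z - W * x / s) / (4 - z * x + W * s) - 1 / (x - z) = -W / (s * (x - z)) := by
    rw [div_sub_div _ _ hN hxz, div_eq_div_iff (mul_ne_zero hN hxz) (mul_ne_zero hs hxz)]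
    field_simp
    linear_combination s * hW2 - W * hs2
  rw [hlog]
  field_simp
  linear_combination hW2 - hs2

/-- For `W ^ 2 = 4 - z ^ 2`, the logarithmic term has derivative `(4 - z²) / ((x - z) √(4 - x²))`
and the others `-(x + z) / √(4 - x²)`; they add up to `√(4 - x²) / (x - z)` because
`4 - x² = (4 - z²) - (x + z) (x - z)`. -/
noncomputable def stieltjesPrimitive (z W : ℂ) (x : ℝ) : ℂ :=
  √(4 - x ^ 2) - z * Real.arcsin (x / 2) -
    W * (log (4 - z * x + W * √(4 - x ^ 2)) - log (x - z))

section StieltjesPrimitive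

variable {z W : ℂ}

lemma re_mul_im_nonpos_of_sq_eq (hz : 0 < z.im) (hW : W ^ 2 = 4 - z ^ 2) (hWre : 0 ≤ W.re) :
    z.re * W.im ≤ 0 := by
  have him := congrArg im hW
  simp only [sq, mul_im, sub_im, im_ofNat, zero_sub, neg_add_rev] at him
  by_contra! h
  have hre : z.re ≠ 0 := by rintro h0; simp [h0] at h
  have hprod : W.re * (z.re * W.im) = -(z.re ^ 2 * z.im) := by
    linear_combination (z.re / 2) * him
  nlinarith [mul_nonneg hWre h.le, mul_pos (pow_pos (abs_pos.2 hre) 2) hz, sq_abs z.re]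

lemma ofReal_sub_mem_slitPlane (hz : 0 < z.im) (x : ℝ) : (x - z : ℂ) ∈ slitPlane :=
  mem_slitPlane_iff.2 (Or.inr (by simp [hz.ne']))

lemma four_sub_mul_add_mem_slitPlane (hz : 0 < z.im) (hW : W ^ 2 = 4 - z ^ 2) (hWre : 0 ≤ W.re)
    {x : ℝ} (hx : x ∈ Icc (-2) 2) : (4 - z * x + W * √(4 - x ^ 2) : ℂ) ∈ slitPlane := by
  obtain ⟨hx₁, hx₂⟩ := hx
  have hs := Real.sqrt_nonneg (4 - x ^ 2)
  have hzW := re_mul_im_nonpos_of_sq_eq hz hW hWre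
  rw [mem_slitPlane_iff]
  simp only [add_re, sub_re, add_im, sub_im, mul_re, mul_im, ofReal_re, ofReal_im]
  norm_num
  rcases lt_or_ge (z.re * x) 4 with h | h
  · left; nlinarith [mul_nonneg hWre hs]
  -- `z.re * x ≥ 4` forces `x` to have the sign of `z.re`, and `W.im` has the opposite one
  · right
    have hxW : x * W.im ≤ 0 := by nlinarith [sq_nonneg x]
    have hx0 : x ≠ 0 := by rintro rfl; linarith
    intro h0
    nlinarith [mul_nonpos_iff.2 (Or.inr ⟨hxW, hs⟩), sq_pos_of_ne_zero hx0]

lemma continuousOn_stieltjesPrimitive (hz : 0 < z.im) (hW : W ^ 2 = 4 - z ^ 2)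
    (hWre : 0 ≤ W.re) : ContinuousOn (stieltjesPrimitive z W) (Icc (-2) 2) := by
  have hlogN : ContinuousOn (fun y : ℝ => log (4 - z * y + W * √(4 - y ^ 2))) (Icc (-2) 2) :=
    (by fun_prop : Continuous _).continuousOn.clog
      fun x hx => four_sub_mul_add_mem_slitPlane hz hW hWre hx
  have hlogD : ContinuousOn (fun y : ℝ => log (y - z)) (Icc (-2) 2) :=
    (by fun_prop : Continuous _).continuousOn.clog fun x _ => ofReal_sub_mem_slitPlane hz x
  unfold stieltjesPrimitive
  fun_prop

lemma hasDerivAt_stieltjesPrimitive (hz : 0 < z.im) (hW : W ^ 2 = 4 - z ^ 2) (hWre : 0 ≤ W.re)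
    {x : ℝ} (hx : x ∈ Ioo (-2) 2) :
    HasDerivAt (stieltjesPrimitive z W) (√(4 - x ^ 2) / (x - z)) x := by
  have hx2 : x ^ 2 < 4 := by nlinarith [hx.1, hx.2]
  set s := √(4 - x ^ 2)
  have hs : 0 < s := Real.sqrt_pos.2 (by linarith)
  have hsqrt : HasDerivAt (fun y : ℝ => (√(4 - y ^ 2) : ℂ)) (-x / s : ℝ) x :=
    (Real.hasDerivAt_sqrt_sub_sq hx2).ofReal_comp
  have harcsin : HasDerivAt (fun y : ℝ => (Real.arcsin (y / 2) : ℂ)) (1 / s : ℝ) x := by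
    have := Real.hasDerivAt_arcsin_div two_pos (by norm_num; exact hx2)
    rw [show (2 : ℝ) ^ 2 = 4 by norm_num] at this
    exact this.ofReal_comp
  have hslit := four_sub_mul_add_mem_slitPlane hz hW hWre (Ioo_subset_Icc_self hx)
  have hN : HasDerivAt (fun y : ℝ => (4 - z * y + W * √(4 - y ^ 2) : ℂ))
      (-z + W * (-x / s : ℝ)) x :=
    ((((hasDerivAt_id x).ofReal_comp.const_mul z).const_sub 4).add
      (hsqrt.const_mul W)).congr_deriv (by simp)
  have hD : HasDerivAt (fun y : ℝ => (y - z : ℂ)) 1 x := (hasDerivAt_id x).ofReal_comp.sub_const z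
  refine ((hsqrt.sub (harcsin.const_mul z)).sub (((hN.clog_real hslit).sub
    (hD.clog_real (ofReal_sub_mem_slitPlane hz x))).const_mul W)).congr_deriv ?_
  have hs2 : (s : ℂ) ^ 2 = 4 - x ^ 2 := by exact_mod_cast Real.sq_sqrt (by linarith)
  rw [← stieltjesPrimitive_deriv_identity (ofReal_ne_zero.2 hs.ne')
    (slitPlane_ne_zero (ofReal_sub_mem_slitPlane hz x)) (slitPlane_ne_zero hslit) hs2 hW]
  push_cast
  ring

lemma stieltjesPrimitive_two (hz : 0 < z.im) :
    stieltjesPrimitive z W 2 = -z * (π / 2) - W * log 2 := by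
  have hne : (2 : ℂ) - z ≠ 0 := slitPlane_ne_zero (by simpa using ofReal_sub_mem_slitPlane hz 2)
  have hlog : log (4 - z * 2) - log (2 - z) = log 2 := by
    rw [show (4 : ℂ) - z * 2 = (2 : ℝ) * (2 - z) by push_cast; ring, log_ofReal_mul two_pos hne,
      ofReal_log zero_le_two]
    simp
  norm_num [stieltjesPrimitive, hlog]

lemma stieltjesPrimitive_neg_two (hz : 0 < z.im) :
    stieltjesPrimitive z W (-2) = z * (π / 2) - W * (log 2 + π * I) := by
  have hu : 0 < (2 + z).im := by simpa using hz
  have hlog : log (4 + z * 2) - log (-2 - z) = log 2 + π * I := by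
    rw [show (4 : ℂ) + z * 2 = (2 : ℝ) * (2 + z) by push_cast; ring,
      log_ofReal_mul two_pos (fun h => by simp [h] at hu), show (-2 : ℂ) - z = -(2 + z) by ring,
      log_neg_of_im_pos hu, ofReal_log zero_le_two]
    push_cast
    ring
  norm_num [stieltjesPrimitive, hlog]

theorem integral_sqrt_four_sub_sq_div_sub (hz : 0 < z.im) (hW : W ^ 2 = 4 - z ^ 2)
    (hWre : 0 ≤ W.re) :
    ∫ x in (-2 : ℝ)..2, (√(4 - x ^ 2) : ℂ) / (x - z) = π * (I * W - z) := by
  have hcont : Continuous fun x : ℝ => (√(4 - x ^ 2) : ℂ) / (x - z) :=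
    (by fun_prop : Continuous _).div (by fun_prop)
      fun x => slitPlane_ne_zero (ofReal_sub_mem_slitPlane hz x)
  rw [intervalIntegral.integral_eq_sub_of_hasDerivAt_of_le (by norm_num)
    (continuousOn_stieltjesPrimitive hz hW hWre)
    (fun x hx => hasDerivAt_stieltjesPrimitive hz hW hWre hx) (hcont.intervalIntegrable _ _),
    stieltjesPrimitive_two hz, stieltjesPrimitive_neg_two hz]
  ring

end StieltjesPrimitive

lemma rhoSC_eq (x : ℝ) : rhoSC x = (2 * π)⁻¹ * √(4 - x ^ 2) := by
  rw [rhoSC, one_div, Real.sqrt_max_zero]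

lemma mSC_eq_intervalIntegral (z : ℂ) :
    mSC z = (2 * π)⁻¹ * ∫ x in (-2 : ℝ)..2, (√(4 - x ^ 2) : ℂ) / (x - z) := by
  have hsupp : Function.support (fun x : ℝ => (√(4 - x ^ 2) : ℂ) / (x - z)) ⊆ Ioc (-2) 2 := by
    refine Function.support_subset_iff'.2 fun x hx => ?_
    have : 4 - x ^ 2 ≤ 0 := by
      rcases not_and_or.1 hx with h | h <;> simp only [not_lt, not_le] at h <;> nlinarith
    simp [Real.sqrt_eq_zero'.2 this]
  rw [intervalIntegral.integral_eq_integral_of_support_subset hsupp, ← integral_const_mul, mSC]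
  congr 1 with x
  rw [rhoSC_eq]
  push_cast
  ring

lemma mSC_eq {z W : ℂ} (hz : 0 < z.im) (hW : W ^ 2 = 4 - z ^ 2) (hWre : 0 ≤ W.re) :
    mSC z = (I * W - z) / 2 := by
  rw [mSC_eq_intervalIntegral, integral_sqrt_four_sub_sq_div_sub hz hW hWre]
  push_cast
  field_simp [ofReal_ne_zero.2 Real.pi_ne_zero]

/-- The Stieltjes transform of the semicircle law satisfies the self-consistent
equation `1 + z·m_sc(z) + m_sc(z)² = 0` on the upper half-plane. -/
theorem mSC_self_consistent (z : ℂ) (hz : 0 < z.im) :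
    1 + z * mSC z + (mSC z) ^ 2 = 0 := by
  obtain ⟨W, hW, hWre⟩ := exists_sq_eq_and_re_nonneg (4 - z ^ 2)
  rw [mSC_eq hz hW hWre]
  linear_combination (W ^ 2 / 4) * I_sq - hW / 4
end

section
/- Let z = E + iη with |E| ≤ 5 and 0 < η ≤ 10, and let κ = min{|E-2|, |E+2|}. Then there exist positive constants c, C (independent of z in this domain) such that: if E ∈ [-2,2] then c√(κ+η) ≤ Im m_sc(z) ≤ C√(κ+η), and if |E| > 2 then c·η/√(κ+η) ≤ Im m_sc(z) ≤ C·η/√(κ+η). -/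
/-!
Since `Im (x - E - iη)⁻¹ = η / ((x - E)² + η²) =: P_η(x - E)`, `Im m_sc(E + iη)` is the Poisson
integral `∫ ρ_sc(x) P_η(x - E) dx`. It is even in `E`, so we may take `E ≥ 0`, where `κ = |2 - E|`.
Everything rests on the square-root vanishing of the density at the edge:
`√(2 - x) / (2π) ≤ ρ_sc(x) ≤ √(2 - x) / π`, the lower bound for `x ∈ [-1, 2]`.

Upper bounds: `√|t| P_η(t) ≤ 2η (|t| + η)^(-3/2)`, which integrates over `t ≥ a` to at most
`4η / √(a + η)`. In the bulk split `√(2 - x) ≤ √κ + √|x - E|` and use `∫ P_η ≤ π`; outside the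
spectrum use `√(2 - x) ≤ √(E - x)` and `E - x ≥ κ` on the support of `ρ_sc`.

Lower bounds: restrict the integral to a window on which both factors are bounded below,
`[E - η/10, E - η/20]` in the bulk and `[2 - s/13, 2 - s/26]` with `s = κ + η` outside.
-/

open MeasureTheory

open Real Set intervalIntegral

-- `poissonUHP η / π` is the Poisson kernel of the upper half-plane at height `η`.
noncomputable def poissonUHP (η t : ℝ) : ℝ := η / (t ^ 2 + η ^ 2)

noncomputable def poissonSC (E η : ℝ) : ℝ := ∫ x, rhoSC x * poissonUHP η (x - E)

lemma sqrt_add_le_sqrt_add_sqrt {a b : ℝ} (ha : 0 ≤ a) (hb : 0 ≤ b) : √(a + b) ≤ √a + √b := by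
  rw [sqrt_le_left (by positivity)]
  nlinarith [sq_sqrt ha, sq_sqrt hb, mul_nonneg (sqrt_nonneg a) (sqrt_nonneg b)]

lemma min_abs_sub_two_abs_add_two (E : ℝ) : min |E - 2| |E + 2| = |(2 - |E|)| := by
  rcases le_total 0 E with h | h
  · rw [abs_of_nonneg h, abs_of_nonneg (by linarith : 0 ≤ E + 2), abs_sub_comm,
      min_eq_left (abs_le.2 ⟨by linarith, by linarith⟩)]
  · rw [abs_of_nonpos h, abs_of_nonpos (by linarith : E - 2 ≤ 0),
      min_eq_right (abs_le.2 ⟨by linarith, by linarith⟩)]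
    ring_nf

lemma rhoSC_nonneg (x : ℝ) : 0 ≤ rhoSC x := by
  unfold rhoSC; positivity

lemma rhoSC_neg (x : ℝ) : rhoSC (-x) = rhoSC x := by
  simp [rhoSC]

lemma rhoSC_eq_zero_of_notMem_Ioo {x : ℝ} (hx : x ∉ Ioo (-2) 2) : rhoSC x = 0 := by
  have h : 4 - x ^ 2 ≤ 0 := by
    rw [mem_Ioo, not_and_or, not_lt, not_lt] at hx
    rcases hx with h | h <;> nlinarith
  simp [rhoSC, max_eq_right h]

lemma continuous_rhoSC : Continuous rhoSC := by
  unfold rhoSC; fun_prop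

lemma hasCompactSupport_rhoSC : HasCompactSupport rhoSC :=
  HasCompactSupport.intro isCompact_Icc fun _ hx =>
    rhoSC_eq_zero_of_notMem_Ioo fun h => hx (Ioo_subset_Icc_self h)

lemma rhoSC_le_sqrt (x : ℝ) : rhoSC x ≤ √(2 - x) / π := by
  rcases le_or_gt 2 x with hx | hx
  · rw [rhoSC_eq_zero_of_notMem_Ioo fun h => h.2.not_ge hx]; positivity
  · have h : max (4 - x ^ 2) 0 ≤ 2 ^ 2 * (2 - x) := max_le (by nlinarith) (by nlinarith)
    calc rhoSC x ≤ 1 / (2 * π) * √(2 ^ 2 * (2 - x)) := by unfold rhoSC; gcongr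
      _ = √(2 - x) / π := by
        rw [sqrt_mul (by norm_num), sqrt_sq (by norm_num)]; field_simp

lemma sqrt_le_rhoSC {x : ℝ} (hx : x ∈ Icc (-1) 2) : √(2 - x) / (2 * π) ≤ rhoSC x := by
  have h : 2 - x ≤ max (4 - x ^ 2) 0 := le_max_of_le_left (by nlinarith [hx.1, hx.2])
  calc √(2 - x) / (2 * π) = 1 / (2 * π) * √(2 - x) := by ring
    _ ≤ rhoSC x := by unfold rhoSC; gcongr

lemma poissonUHP_nonneg {η : ℝ} (hη : 0 ≤ η) (t : ℝ) : 0 ≤ poissonUHP η t := by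
  unfold poissonUHP; positivity

lemma poissonUHP_neg (η t : ℝ) : poissonUHP η (-t) = poissonUHP η t := by
  simp [poissonUHP]

lemma continuous_poissonUHP {η : ℝ} (hη : 0 < η) : Continuous (poissonUHP η) :=
  continuous_const.div (by fun_prop) fun _ => by positivity

lemma div_le_poissonUHP {η t d : ℝ} (hη : 0 < η) (ht : |t| ≤ d) :
    η / (d ^ 2 + η ^ 2) ≤ poissonUHP η t :=
  div_le_div_of_nonneg_left hη.le (by positivity) (by nlinarith [abs_nonneg t, sq_abs t])

lemma integral_poissonUHP_le_pi {η : ℝ} (hη : 0 < η) (a b : ℝ) :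
    ∫ t in a..b, poissonUHP η t ≤ π := by
  have h : ∀ t, poissonUHP η t = η⁻¹ * (1 + (t / η) ^ 2)⁻¹ := fun t => by
    unfold poissonUHP; field_simp; ring
  simp_rw [h]
  rw [intervalIntegral.integral_const_mul, integral_comp_div (fun t => (1 + t ^ 2)⁻¹) hη.ne',
    integral_inv_one_add_sq, smul_eq_mul, inv_mul_cancel_left₀ hη.ne']
  linarith [arctan_lt_pi_div_two (b / η), neg_pi_div_two_lt_arctan (a / η)]

lemma sqrt_abs_mul_poissonUHP_le {η : ℝ} (hη : 0 < η) (t : ℝ) :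
    √|t| * poissonUHP η t ≤ 2 * η * (|t| + η) ^ (-(3 / 2 : ℝ)) := by
  have hpos : 0 < |t| + η := by positivity
  have hpow : (|t| + η) ^ (-(3 / 2 : ℝ)) = ((|t| + η) * √(|t| + η))⁻¹ := by
    rw [rpow_neg hpos.le, show (3 / 2 : ℝ) = 1 + 1 / 2 by norm_num, rpow_add hpos, rpow_one,
      sqrt_eq_rpow]
  have hgm : √|t| * √(|t| + η) ≤ |t| + η := by
    rw [← sqrt_mul (abs_nonneg t), sqrt_le_left hpos.le]
    nlinarith [abs_nonneg t]
  rw [hpow, poissonUHP, ← sq_abs t, ← div_eq_mul_inv, mul_div_assoc',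
    div_le_div_iff₀ (by positivity) (by positivity)]
  nlinarith [mul_le_mul_of_nonneg_right hgm hpos.le, sq_nonneg (|t| - η)]

lemma integral_add_rpow_neg_three_halves_le {a b c : ℝ} (hab : a ≤ b) (hac : 0 < a + c) :
    ∫ t in a..b, (t + c) ^ (-(3 / 2 : ℝ)) ≤ 2 / √(a + c) := by
  have h0 : (0 : ℝ) ∉ uIcc (a + c) (b + c) := by
    rw [uIcc_of_le (by linarith)]; exact fun h => h.1.not_gt hac
  have hb : 0 ≤ (b + c) ^ (-(1 / 2 : ℝ)) := rpow_nonneg (by linarith) _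
  have ha : (a + c) ^ (-(1 / 2 : ℝ)) = 1 / √(a + c) := by
    rw [rpow_neg hac.le, sqrt_eq_rpow, inv_eq_one_div]
  rw [integral_comp_add_right (fun t => t ^ (-(3 / 2 : ℝ))),
    integral_rpow (Or.inr ⟨by norm_num, h0⟩), show -(3 / 2 : ℝ) + 1 = -(1 / 2) by norm_num, ha,
    div_neg, ← neg_div, neg_sub, div_div_eq_mul_div, div_one]
  linarith [div_eq_mul_one_div 2 √(a + c)]

lemma continuous_sqrt_abs_mul_poissonUHP {η : ℝ} (hη : 0 < η) :
    Continuous fun t => √|t| * poissonUHP η t :=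
  (by fun_prop : Continuous fun t => √|t|).mul (continuous_poissonUHP hη)

lemma integral_sqrt_abs_mul_poissonUHP_le {η a b : ℝ} (hη : 0 < η) (ha : 0 ≤ a) (hab : a ≤ b) :
    ∫ t in a..b, √|t| * poissonUHP η t ≤ 4 * η / √(a + η) := by
  have hmaj : ContinuousOn (fun t => 2 * η * (t + η) ^ (-(3 / 2 : ℝ))) (uIcc a b) := by
    rw [uIcc_of_le hab]
    exact continuousOn_const.mul ((continuous_add_const η).continuousOn.rpow_const
      fun t ht => Or.inl (by linarith [ht.1] : 0 < t + η).ne')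
  calc ∫ t in a..b, √|t| * poissonUHP η t
      ≤ ∫ t in a..b, 2 * η * (t + η) ^ (-(3 / 2 : ℝ)) := by
        refine integral_mono_on hab ((continuous_sqrt_abs_mul_poissonUHP hη).intervalIntegrable a b)
          hmaj.intervalIntegrable fun t ht => ?_
        simpa [abs_of_nonneg (ha.trans ht.1)] using sqrt_abs_mul_poissonUHP_le hη t
    _ ≤ 2 * η * (2 / √(a + η)) := by
        rw [intervalIntegral.integral_const_mul]
        gcongr
        exact integral_add_rpow_neg_three_halves_le hab (by linarith)
    _ = 4 * η / √(a + η) := by ring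

lemma integral_sqrt_abs_mul_poissonUHP_le_of_nonpos_of_nonneg {η a b : ℝ} (hη : 0 < η)
    (ha : a ≤ 0) (hb : 0 ≤ b) : ∫ t in a..b, √|t| * poissonUHP η t ≤ 8 * √η := by
  have hcont := continuous_sqrt_abs_mul_poissonUHP hη
  have hleft : ∫ t in 0..-a, √|t| * poissonUHP η t = ∫ t in a..0, √|t| * poissonUHP η t := by
    simpa only [neg_neg, neg_zero, abs_neg, poissonUHP_neg] using
      integral_comp_neg (a := 0) (b := -a) fun t => √|t| * poissonUHP η t
  have hη' : 4 * η / √(0 + η) = 4 * √η := by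
    rw [zero_add, div_eq_iff (by positivity), mul_assoc, mul_self_sqrt hη.le]
  rw [← integral_add_adjacent_intervals (hcont.intervalIntegrable a 0)
    (hcont.intervalIntegrable 0 b), ← hleft]
  linarith [integral_sqrt_abs_mul_poissonUHP_le hη le_rfl (by linarith : 0 ≤ -a),
    integral_sqrt_abs_mul_poissonUHP_le hη le_rfl hb]

lemma continuous_rhoSC_mul_poissonUHP {η : ℝ} (hη : 0 < η) (E : ℝ) :
    Continuous fun x => rhoSC x * poissonUHP η (x - E) :=
  continuous_rhoSC.mul ((continuous_poissonUHP hη).comp (continuous_sub_right E))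

lemma im_mSC_eq_poissonSC {E η : ℝ} (hη : 0 < η) :
    (mSC (E + η * Complex.I)).im = poissonSC E η := by
  set z : ℂ := E + η * Complex.I
  have hden : ∀ x : ℝ, (x : ℂ) - z ≠ 0 := fun x h => by
    simpa [z, hη.ne'] using congrArg Complex.im h
  have hcont : Continuous fun x : ℝ => (rhoSC x : ℂ) / ((x : ℂ) - z) :=
    (Complex.continuous_ofReal.comp continuous_rhoSC).div (by fun_prop) hden
  have hint : Integrable fun x : ℝ => (rhoSC x : ℂ) / ((x : ℂ) - z) :=
    hcont.integrable_of_hasCompactSupport (HasCompactSupport.intro isCompact_Icc fun x hx => by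
      rw [rhoSC_eq_zero_of_notMem_Ioo fun h => hx (Ioo_subset_Icc_self h), Complex.ofReal_zero,
        zero_div])
  have him : ∀ x : ℝ, ((rhoSC x : ℂ) / ((x : ℂ) - z)).im = rhoSC x * poissonUHP η (x - E) := by
    intro x
    simp only [z, poissonUHP, Complex.div_im, Complex.normSq_apply, Complex.ofReal_re,
      Complex.ofReal_im, Complex.sub_re, Complex.sub_im, Complex.add_re, Complex.add_im,
      Complex.mul_re, Complex.mul_im, Complex.I_re, Complex.I_im]
    ring
  rw [mSC, poissonSC, ← funext him]
  exact (integral_im hint).symm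

lemma poissonSC_neg (E η : ℝ) : poissonSC (-E) η = poissonSC E η := by
  rw [poissonSC, poissonSC, ← integral_neg_eq_self]
  congr 1 with x
  rw [rhoSC_neg, ← poissonUHP_neg, neg_sub_neg, neg_sub]

lemma poissonSC_abs (E η : ℝ) : poissonSC |E| η = poissonSC E η := by
  rcases abs_choice E with h | h <;> rw [h]
  exact poissonSC_neg E η

lemma poissonSC_eq_intervalIntegral (E η : ℝ) :
    poissonSC E η = ∫ x in (-2)..2, rhoSC x * poissonUHP η (x - E) := by
  rw [integral_of_le (by norm_num), poissonSC, ← setIntegral_eq_integral_of_forall_compl_eq_zero]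
  intro x hx
  rw [rhoSC_eq_zero_of_notMem_Ioo fun h => hx (Ioo_subset_Ioc_self h), zero_mul]

lemma mul_sub_le_poissonSC {E η a b m : ℝ} (hη : 0 < η) (hab : a ≤ b)
    (h : ∀ x ∈ Icc a b, m ≤ rhoSC x * poissonUHP η (x - E)) : m * (b - a) ≤ poissonSC E η := by
  have hcont := continuous_rhoSC_mul_poissonUHP hη E
  have hint : Integrable fun x => rhoSC x * poissonUHP η (x - E) :=
    hcont.integrable_of_hasCompactSupport hasCompactSupport_rhoSC.mul_right
  calc m * (b - a) = ∫ _ in a..b, m := by simp [mul_comm]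
    _ ≤ ∫ x in a..b, rhoSC x * poissonUHP η (x - E) :=
      integral_mono_on hab intervalIntegrable_const (hcont.intervalIntegrable a b) h
    _ ≤ poissonSC E η := by
      rw [integral_of_le hab]
      exact setIntegral_le_integral hint (.of_forall fun x =>
        mul_nonneg (rhoSC_nonneg x) (poissonUHP_nonneg hη.le _))

lemma rhoSC_mul_poissonUHP_le_of_le_two {E η : ℝ} (hη : 0 < η) (hE : E ≤ 2) (x : ℝ) :
    rhoSC x * poissonUHP η (x - E)
      ≤ √(2 - E) / π * poissonUHP η (x - E) + π⁻¹ * (√|x - E| * poissonUHP η (x - E)) := by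
  have hsqrt : √(2 - x) ≤ √(2 - E) + √|x - E| :=
    (sqrt_le_sqrt (by linarith [neg_abs_le (x - E)])).trans
      (sqrt_add_le_sqrt_add_sqrt (by linarith) (abs_nonneg _))
  have hP := poissonUHP_nonneg hη.le (x - E)
  calc rhoSC x * poissonUHP η (x - E) ≤ √(2 - x) / π * poissonUHP η (x - E) := by
        gcongr; exact rhoSC_le_sqrt x
    _ ≤ (√(2 - E) + √|x - E|) / π * poissonUHP η (x - E) := by gcongr
    _ = _ := by ring

lemma rhoSC_mul_poissonUHP_le_of_two_le {E η : ℝ} (hη : 0 < η) (hE : 2 ≤ E) (x : ℝ) :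
    rhoSC x * poissonUHP η (x - E) ≤ π⁻¹ * (√|E - x| * poissonUHP η (E - x)) := by
  rw [← neg_sub E x, poissonUHP_neg, ← mul_assoc, inv_mul_eq_div]
  gcongr
  · exact poissonUHP_nonneg hη.le _
  · exact (rhoSC_le_sqrt x).trans (by gcongr; linarith [le_abs_self (E - x)])

lemma poissonSC_le_of_mem_Icc {E η : ℝ} (hη : 0 < η) (hE : E ∈ Icc 0 2) :
    poissonSC E η ≤ 4 * √(2 - E + η) := by
  have hP : Continuous fun x => poissonUHP η (x - E) :=
    (continuous_poissonUHP hη).comp (continuous_sub_right E)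
  have hQ : Continuous fun x => √|x - E| * poissonUHP η (x - E) :=
    (continuous_sqrt_abs_mul_poissonUHP hη).comp (continuous_sub_right E)
  have hPi : IntervalIntegrable (fun x => √(2 - E) / π * poissonUHP η (x - E)) volume (-2) 2 :=
    (continuous_const.mul hP).intervalIntegrable _ _
  have hQi : IntervalIntegrable (fun x => π⁻¹ * (√|x - E| * poissonUHP η (x - E))) volume (-2) 2 :=
    (continuous_const.mul hQ).intervalIntegrable _ _
  have hπ : π⁻¹ * (8 * √η) ≤ 3 * √η := by
    rw [inv_mul_le_iff₀ pi_pos]; nlinarith [pi_gt_three, sqrt_nonneg η]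
  rw [poissonSC_eq_intervalIntegral]
  calc ∫ x in (-2)..2, rhoSC x * poissonUHP η (x - E)
      ≤ ∫ x in (-2)..2, (√(2 - E) / π * poissonUHP η (x - E)
          + π⁻¹ * (√|x - E| * poissonUHP η (x - E))) :=
        integral_mono_on (by norm_num)
          ((continuous_rhoSC_mul_poissonUHP hη E).intervalIntegrable _ _) (hPi.add hQi)
          fun x _ => rhoSC_mul_poissonUHP_le_of_le_two hη hE.2 x
    _ = √(2 - E) / π * (∫ t in (-2 - E)..(2 - E), poissonUHP η t)
          + π⁻¹ * ∫ t in (-2 - E)..(2 - E), √|t| * poissonUHP η t := by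
        rw [integral_add hPi hQi, intervalIntegral.integral_const_mul,
          intervalIntegral.integral_const_mul, integral_comp_sub_right (poissonUHP η),
          integral_comp_sub_right fun t => √|t| * poissonUHP η t]
    _ ≤ √(2 - E) / π * π + π⁻¹ * (8 * √η) := by
        gcongr
        · exact integral_poissonUHP_le_pi hη _ _
        · exact integral_sqrt_abs_mul_poissonUHP_le_of_nonpos_of_nonneg hη
            (by linarith [hE.1]) (by linarith [hE.2])
    _ ≤ 4 * √(2 - E + η) := by
        rw [div_mul_cancel₀ _ pi_pos.ne']
        linarith [sqrt_le_sqrt (by linarith : 2 - E ≤ 2 - E + η),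
          sqrt_le_sqrt (by linarith [hE.2] : η ≤ 2 - E + η)]

lemma poissonSC_le_of_two_lt {E η : ℝ} (hη : 0 < η) (hE : 2 < E) :
    poissonSC E η ≤ 2 * η / √(E - 2 + η) := by
  have hQ : Continuous fun x => π⁻¹ * (√|E - x| * poissonUHP η (E - x)) :=
    continuous_const.mul
      ((continuous_sqrt_abs_mul_poissonUHP hη).comp (continuous_sub_left E))
  rw [poissonSC_eq_intervalIntegral]
  calc ∫ x in (-2)..2, rhoSC x * poissonUHP η (x - E)
      ≤ ∫ x in (-2)..2, π⁻¹ * (√|E - x| * poissonUHP η (E - x)) :=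
        integral_mono_on (by norm_num)
          ((continuous_rhoSC_mul_poissonUHP hη E).intervalIntegrable _ _)
          (hQ.intervalIntegrable _ _) fun x _ => rhoSC_mul_poissonUHP_le_of_two_le hη hE.le x
    _ = π⁻¹ * ∫ t in (E - 2)..(E + 2), √|t| * poissonUHP η t := by
        rw [intervalIntegral.integral_const_mul,
          integral_comp_sub_left (fun t => √|t| * poissonUHP η t), sub_neg_eq_add]
    _ ≤ π⁻¹ * (4 * η / √(E - 2 + η)) := by
        gcongr
        exact integral_sqrt_abs_mul_poissonUHP_le hη (by linarith) (by linarith)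
    _ ≤ 2 * η / √(E - 2 + η) := by
        rw [inv_mul_le_iff₀ pi_pos, mul_div_assoc, mul_div_assoc, ← mul_assoc]
        gcongr
        linarith [pi_gt_three]

lemma sqrt_div_le_poissonSC_of_mem_Icc {E η : ℝ} (hη : 0 < η) (hη10 : η ≤ 10)
    (hE : E ∈ Icc 0 2) : √(2 - E + η) / 1600 ≤ poissonSC E η := by
  set s := 2 - E + η
  have hwin : ∀ x ∈ Icc (E - η / 10) (E - η / 20),
      √(s / 20) / (2 * π) * (η / (η ^ 2 + η ^ 2)) ≤ rhoSC x * poissonUHP η (x - E) := by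
    rintro x ⟨hx₁, hx₂⟩
    have hρ : √(s / 20) / (2 * π) ≤ rhoSC x :=
      le_trans (by gcongr; linarith [hE.2])
        (sqrt_le_rhoSC ⟨by linarith [hE.1], by linarith [hE.2]⟩)
    exact mul_le_mul hρ (div_le_poissonUHP hη (abs_le.2 ⟨by linarith, by linarith⟩))
      (by positivity) (rhoSC_nonneg x)
  have hsqrt : √s ≤ 5 * √(s / 20) := by
    rw [show 5 * √(s / 20) = √(5 ^ 2 * (s / 20)) by
      rw [sqrt_mul (by norm_num), sqrt_sq (by norm_num)]]
    exact sqrt_le_sqrt (by linarith [hE.2])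
  calc √s / 1600 ≤ √(s / 20) / (80 * 4) := by linarith
    _ ≤ √(s / 20) / (80 * π) := by gcongr; exact pi_le_four
    _ = √(s / 20) / (2 * π) * (η / (η ^ 2 + η ^ 2)) * (E - η / 20 - (E - η / 10)) := by
        field_simp; ring
    _ ≤ poissonSC E η := mul_sub_le_poissonSC hη (by linarith) hwin

lemma div_sqrt_le_poissonSC_of_mem_Ioc {E η : ℝ} (hη : 0 < η) (hη10 : η ≤ 10)
    (hE : E ∈ Ioc 2 5) : η / (10000 * √(E - 2 + η)) ≤ poissonSC E η := by
  set s := E - 2 + η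
  have hs : 0 < s := by linarith [hE.1]
  have hηs : η ≤ s := by linarith [hE.1]
  have hwin : ∀ x ∈ Icc (2 - s / 13) (2 - s / 26),
      √(s / 26) / (2 * π) * (η / ((2 * s) ^ 2 + η ^ 2)) ≤ rhoSC x * poissonUHP η (x - E) := by
    rintro x ⟨hx₁, hx₂⟩
    have hρ : √(s / 26) / (2 * π) ≤ rhoSC x :=
      le_trans (by gcongr; linarith) (sqrt_le_rhoSC ⟨by linarith [hE.2], by linarith⟩)
    exact mul_le_mul hρ (div_le_poissonUHP hη (abs_le.2 ⟨by linarith, by linarith [hE.1]⟩))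
      (by positivity) (rhoSC_nonneg x)
  have hsqrt : √s ≤ 6 * √(s / 26) := by
    rw [show 6 * √(s / 26) = √(6 ^ 2 * (s / 26)) by
      rw [sqrt_mul (by norm_num), sqrt_sq (by norm_num)]]
    exact sqrt_le_sqrt (by linarith)
  have hscale : ∀ q > 0,
      η / (1560 * π * q) = q / 6 / (2 * π) * (η / (5 * (q ^ 2) ^ 2)) * (q ^ 2 / 26) :=
    fun q hq => by field_simp; ring
  have heq := hscale √s (sqrt_pos.2 hs)
  rw [sq_sqrt hs.le] at heq
  calc η / (10000 * √s) ≤ η / (1560 * π * √s) := by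
        gcongr; nlinarith [pi_le_four]
    _ = √s / 6 / (2 * π) * (η / (5 * s ^ 2)) * (s / 26) := heq
    _ ≤ √(s / 26) / (2 * π) * (η / ((2 * s) ^ 2 + η ^ 2)) * (2 - s / 26 - (2 - s / 13)) := by
        rw [show 2 - s / 26 - (2 - s / 13) = s / 26 by ring]
        gcongr
        · linarith
        · nlinarith [mul_le_mul hηs hηs hη.le hs.le]
    _ ≤ poissonSC E η := mul_sub_le_poissonSC hη (by linarith) hwin

/-- Quantitative behaviour of `Im m_sc(z)` for `z = E + iη` in the domain
`S₀ = {|E| ≤ 5, 0 < η ≤ 10}`, with `κ = min(|E-2|, |E+2|)`: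
`Im m_sc(z) ≍ √(κ+η)` if `E ∈ [-2,2]` and `Im m_sc(z) ≍ η/√(κ+η)` if `|E| > 2`. -/
theorem im_mSC_bounds :
    ∃ c > (0:ℝ), ∃ C > (0:ℝ), ∀ E η : ℝ, |E| ≤ 5 → 0 < η → η ≤ 10 →
      ((-2 ≤ E ∧ E ≤ 2) →
        c * Real.sqrt (min |E - 2| |E + 2| + η)
            ≤ (mSC (E + η * Complex.I)).im ∧
        (mSC (E + η * Complex.I)).im
            ≤ C * Real.sqrt (min |E - 2| |E + 2| + η)) ∧
      (2 < |E| →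
        c * η / Real.sqrt (min |E - 2| |E + 2| + η)
            ≤ (mSC (E + η * Complex.I)).im ∧
        (mSC (E + η * Complex.I)).im
            ≤ C * η / Real.sqrt (min |E - 2| |E + 2| + η)) := by
  refine ⟨1 / 10000, by norm_num, 4, by norm_num, fun E η hE hη hη10 => ?_⟩
  rw [im_mSC_eq_poissonSC hη, ← poissonSC_abs, min_abs_sub_two_abs_add_two]
  refine ⟨fun hE2 => ?_, fun hE2 => ?_⟩
  · have hmem : |E| ∈ Icc 0 2 := ⟨abs_nonneg E, abs_le.2 hE2⟩
    rw [abs_of_nonneg (sub_nonneg.2 hmem.2)]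
    refine ⟨le_trans ?_ (sqrt_div_le_poissonSC_of_mem_Icc hη hη10 hmem),
      poissonSC_le_of_mem_Icc hη hmem⟩
    linarith [sqrt_nonneg (2 - |E| + η)]
  · rw [abs_of_neg (sub_neg.2 hE2), neg_sub]
    refine ⟨le_of_eq_of_le (by ring) (div_sqrt_le_poissonSC_of_mem_Ioc hη hη10 ⟨hE2, hE⟩),
      (poissonSC_le_of_two_lt hη hE2).trans ?_⟩
    gcongr
    norm_num
end

section
/- If X ≺ Y, the expectations satisfy E[Y^(N)] ≥ N^(-c₁) for some fixed c₁ > 0, and |X^(N)| ≤ N^(c₂) almost surely for some fixed c₂ > 0, then E[X] ≺ E[Y], i.e., for all τ > 0 there is N₀ such that E[X^(N)] ≤ N^τ E[Y^(N)] for N ≥ N₀. -/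
/-!
Off the event `{X > N^(τ/2) Y}` we have `X ≤ N^(τ/2) Y`, and on it `X ≤ N^c₂`; hence
`E X ≤ N^(τ/2) E Y + N^c₂ P(X > N^(τ/2) Y)`. Stochastic domination with `Γ = c₁ + c₂` makes the
second term at most `N^(-c₁) ≤ E Y`, and `N^(τ/2) + 1 ≤ N^τ` once `N^(τ/2) ≥ 2`.
-/

open MeasureTheory

/-- Stochastic domination: `X ≺ Y` iff for all `τ > 0` and `Γ > 0`,
`P(X^(N) > N^τ · Y^(N)) ≤ N^(-Γ)` for all sufficiently large `N`. -/
def StochDom {Ω : Type*} [MeasurableSpace Ω] (μ : Measure Ω) (X Y : ℕ → Ω → ℝ) : Prop :=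
  ∀ τ > (0:ℝ), ∀ Γ > (0:ℝ), ∃ N₀ : ℕ, ∀ N ≥ N₀,
    μ {ω | X N ω > (N : ℝ) ^ τ * Y N ω} ≤ ENNReal.ofReal ((N : ℝ) ^ (-Γ))

open Filter Real

theorem integral_le_mul_integral_add_mul_measureReal {Ω : Type*} [MeasurableSpace Ω]
    {μ : Measure Ω} [IsFiniteMeasure μ] {X Y : Ω → ℝ} {c M : ℝ} (hc : 0 ≤ c)
    (hXm : AEStronglyMeasurable X μ) (hYint : Integrable Y μ) (hY : ∀ᵐ ω ∂μ, 0 ≤ Y ω)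
    (hXbd : ∀ᵐ ω ∂μ, |X ω| ≤ M) :
    ∫ ω, X ω ∂μ ≤ c * ∫ ω, Y ω ∂μ + M * μ.real {ω | c * Y ω < X ω} := by
  -- a measurable hull of the bad event, so that its indicator can be integrated
  set T := toMeasurable μ {ω | c * Y ω < X ω}
  have hT : MeasurableSet T := measurableSet_toMeasurable μ _
  have hXint : Integrable X μ :=
    (integrable_const M).mono' hXm (by simpa only [Real.norm_eq_abs] using hXbd)
  have hbound : ∀ᵐ ω ∂μ, X ω ≤ c * Y ω + T.indicator (fun _ ↦ M) ω := by
    filter_upwards [hXbd, hY] with ω hXω hYω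
    by_cases hω : ω ∈ T
    · rw [Set.indicator_of_mem hω]
      linarith [le_abs_self (X ω), mul_nonneg hc hYω]
    · have hle : X ω ≤ c * Y ω := not_lt.mp fun h ↦ hω (subset_toMeasurable μ _ h)
      rwa [Set.indicator_of_notMem hω, add_zero]
  calc ∫ ω, X ω ∂μ ≤ ∫ ω, (c * Y ω + T.indicator (fun _ ↦ M) ω) ∂μ :=
        integral_mono_ae hXint ((hYint.const_mul c).add ((integrable_const M).indicator hT)) hbound
    _ = c * ∫ ω, Y ω ∂μ + M * μ.real {ω | c * Y ω < X ω} := by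
        rw [integral_add (hYint.const_mul c) ((integrable_const M).indicator hT),
          integral_const_mul, integral_indicator_const M hT, smul_eq_mul, mul_comm M,
          measureReal_def, measureReal_def, measure_toMeasurable]

theorem stochDom_expectation_general {Ω : Type*} [MeasurableSpace Ω] (μ : Measure Ω)
    [IsProbabilityMeasure μ] (X Y : ℕ → Ω → ℝ)
    (hY : ∀ N ω, 0 ≤ Y N ω)
    (hXmeas : ∀ N, Measurable (X N)) (hYint : ∀ N, Integrable (Y N) μ)
    (hXY : StochDom μ X Y)
    (c₁ c₂ : ℝ) (hc₁ : 0 < c₁) (hc₂ : 0 < c₂)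
    (hEY : ∀ N : ℕ, (N : ℝ) ^ (-c₁) ≤ ∫ ω, Y N ω ∂μ)
    (hXbd : ∀ N : ℕ, ∀ᵐ ω ∂μ, |X N ω| ≤ (N : ℝ) ^ c₂) :
    ∀ τ > (0:ℝ), ∃ N₀ : ℕ, ∀ N ≥ N₀,
      (∫ ω, X N ω ∂μ) ≤ (N : ℝ) ^ τ * ∫ ω, Y N ω ∂μ := by
  intro τ hτ
  refine eventually_atTop.mp ?_
  have hdom := eventually_atTop.mpr (hXY (τ / 2) (by positivity) (c₁ + c₂) (by positivity))
  have hlarge : ∀ᶠ N : ℕ in atTop, 2 ≤ (N : ℝ) ^ (τ / 2) :=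
    ((tendsto_rpow_atTop (by positivity)).comp tendsto_natCast_atTop_atTop).eventually_ge_atTop 2
  filter_upwards [hdom, hlarge] with N hμE hc
  set c := (N : ℝ) ^ (τ / 2)
  set A := ∫ ω, Y N ω ∂μ
  have hA : 0 ≤ A := integral_nonneg (hY N)
  calc ∫ ω, X N ω ∂μ ≤ c * A + (N : ℝ) ^ c₂ * μ.real {ω | c * Y N ω < X N ω} :=
        integral_le_mul_integral_add_mul_measureReal (by positivity) (hXmeas N).aestronglyMeasurable
          (hYint N) (.of_forall (hY N)) (hXbd N)
    _ ≤ c * A + (N : ℝ) ^ c₂ * (N : ℝ) ^ (-(c₁ + c₂)) := by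
        gcongr
        exact ENNReal.toReal_le_of_le_ofReal (by positivity) hμE
    _ = c * A + (N : ℝ) ^ (-c₁) := by
        rw [← rpow_add' (Nat.cast_nonneg N) (by linarith)]
        ring_nf
    _ ≤ c * c * A := by
        have hcc : 1 ≤ c * (c - 1) := by nlinarith
        nlinarith [mul_le_mul_of_nonneg_right hcc hA, hEY N]
    _ = (N : ℝ) ^ τ * A := by
        rw [← rpow_add' (Nat.cast_nonneg N) (by linarith), add_halves]

/-- If `X ≺ Y`, `E[Y^(N)] ≥ N^(-c₁)` for a fixed `c₁ > 0`, and
`|X^(N)| ≤ N^(c₂)` almost surely for a fixed `c₂ > 0`, then expectations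
are dominated: for every `τ > 0`, `E[X^(N)] ≤ N^τ · E[Y^(N)]` for all large `N`. -/
theorem stochDom_expectation {Ω : Type*} [MeasurableSpace Ω] (μ : Measure Ω)
    [IsProbabilityMeasure μ] (X Y : ℕ → Ω → ℝ)
    (hX : ∀ N ω, 0 ≤ X N ω) (hY : ∀ N ω, 0 ≤ Y N ω)
    (hXmeas : ∀ N, Measurable (X N)) (hYint : ∀ N, Integrable (Y N) μ)
    (hXY : StochDom μ X Y)
    (c₁ c₂ : ℝ) (hc₁ : 0 < c₁) (hc₂ : 0 < c₂)
    (hEY : ∀ N : ℕ, (N : ℝ) ^ (-c₁) ≤ ∫ ω, Y N ω ∂μ)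
    (hXbd : ∀ N : ℕ, ∀ᵐ ω ∂μ, |X N ω| ≤ (N : ℝ) ^ c₂) :
    ∀ τ > (0:ℝ), ∃ N₀ : ℕ, ∀ N ≥ N₀,
      (∫ ω, X N ω ∂μ) ≤ (N : ℝ) ^ τ * ∫ ω, Y N ω ∂μ :=
  stochDom_expectation_general μ X Y hY hXmeas hYint hXY c₁ c₂ hc₁ hc₂ hEY hXbd
end

section
/- For x ≤ E − l₁ with l₁ ≥ η > 0 and E < E_L, the smoothed indicator f(x) = (χ_E ⋆ θ_η)(x) satisfies f(x) ≤ C·η·(E_L − E)/((E_L − x)(E − x)) ≤ C·min{(E_L − E)η/(E − x)², η/(E − x)} for an absolute constant C. -/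
open MeasureTheory

/-! Away from its centre the Cauchy kernel `θ_η(x - y)` is dominated by `η / (π (y - x)²)`,
whose integral over `[E, E_L]` is `η/π · ((E - x)⁻¹ - (E_L - x)⁻¹) = η/π · (E_L - E)/((E_L - x)(E - x))`.
This gives the first bound with `C = 1/π`; the second follows from `E - x ≤ E_L - x`. -/

open Set intervalIntegral
open scoped Interval

theorem integral_inv_sub_sq {a b x : ℝ} (hx : x ∉ [[a, b]]) :
    ∫ y in a..b, ((y - x) ^ 2)⁻¹ = (a - x)⁻¹ - (b - x)⁻¹ := by
  have h0 : (0 : ℝ) ∉ [[a - x, b - x]] := by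
    rw [← image_sub_const_uIcc]
    rintro ⟨y, hy, hyx⟩
    exact hx (sub_eq_zero.1 hyx ▸ hy)
  have hpow := integral_zpow (a := a - x) (b := b - x) (n := -2) (Or.inr ⟨by norm_num, h0⟩)
  simp only [← zpow_natCast, ← zpow_neg]
  rw [integral_comp_sub_right (fun t : ℝ => t ^ (-(2 : ℕ) : ℤ)) x]
  norm_num at hpow ⊢
  rw [hpow]
  ring

theorem cauchy_kernel_le_inv_sq {η x y : ℝ} (hη : 0 ≤ η) (hxy : x ≠ y) :
    η / (Real.pi * ((x - y) ^ 2 + η ^ 2)) ≤ Real.pi⁻¹ * η * ((y - x) ^ 2)⁻¹ := by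
  have hsq : 0 < (y - x) ^ 2 := by positivity [sub_ne_zero.2 hxy.symm]
  rw [← div_eq_mul_inv, inv_mul_eq_div, div_div]
  gcongr
  nlinarith [sq_nonneg η]

theorem integral_cauchy_kernel_le {a b η x : ℝ} (hη : 0 < η) (hab : a ≤ b) (hx : x ∉ Icc a b) :
    ∫ y in a..b, η / (Real.pi * ((x - y) ^ 2 + η ^ 2))
      ≤ Real.pi⁻¹ * η * ((a - x)⁻¹ - (b - x)⁻¹) := by
  rw [← uIcc_of_le hab] at hx
  have hcont : ContinuousOn (fun y => ((y - x) ^ 2)⁻¹) [[a, b]] :=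
    ((continuous_sub_right x).pow 2).continuousOn.inv₀ fun y hy =>
      pow_ne_zero 2 (sub_ne_zero.2 (ne_of_mem_of_not_mem hy hx))
  rw [← integral_inv_sub_sq hx, ← intervalIntegral.integral_const_mul]
  refine integral_mono_on hab ?_ ((continuousOn_const.mul hcont).intervalIntegrable) fun y hy => ?_
  · exact (continuous_const.div (by fun_prop) fun y => by positivity).intervalIntegrable _ _
  · exact cauchy_kernel_le_inv_sq hη.le (ne_of_mem_of_not_mem (Icc_subset_uIcc hy) hx).symm

theorem mul_sub_div_mul_le_min {a b η : ℝ} (ha : 0 < a) (hab : a ≤ b) (hη : 0 ≤ η) :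
    η * (b - a) / (b * a) ≤ min ((b - a) * η / a ^ 2) (η / a) := by
  have hb : 0 < b := ha.trans_le hab
  apply le_min
  · rw [div_le_div_iff₀ (by positivity) (by positivity)]
    nlinarith [mul_nonneg (mul_nonneg hη (sub_nonneg.2 hab)) (mul_nonneg ha.le (sub_nonneg.2 hab))]
  · rw [div_le_div_iff₀ (by positivity) ha]
    nlinarith [mul_nonneg (mul_nonneg hη ha.le) ha.le]

/-- Decay of the smoothed indicator `f = χ_E ⋆ θ_η` to the left of the window:
for `x ≤ E − l₁` with `l₁ ≥ η > 0` and `E < E_L`,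
`f(x) ≤ C·η·(E_L − E)/((E_L − x)(E − x)) ≤ C·min{(E_L − E)η/(E − x)², η/(E − x)}`
for an absolute constant `C`. Here
`(χ_E ⋆ θ_η)(x) = ∫_E^{E_L} θ_η(x − y) dy` with `θ_η(y) = η/(π(y² + η²))`. -/
theorem smoothed_indicator_left_decay :
    ∃ C : ℝ, 0 < C ∧ ∀ E EL η l₁ x : ℝ, E < EL → 0 < η → η ≤ l₁ → x ≤ E - l₁ →
      (∫ y in E..EL, η / (Real.pi * ((x - y) ^ 2 + η ^ 2)))
          ≤ C * η * (EL - E) / ((EL - x) * (E - x)) ∧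
      C * η * (EL - E) / ((EL - x) * (E - x))
          ≤ C * min ((EL - E) * η / (E - x) ^ 2) (η / (E - x)) := by
  refine ⟨Real.pi⁻¹, inv_pos.2 Real.pi_pos, fun E EL η l₁ x hEEL hη hηl hx => ?_⟩
  have hxE : x < E := by linarith
  have hinv : (E - x)⁻¹ - (EL - x)⁻¹ = (EL - E) / ((EL - x) * (E - x)) := by
    field_simp [(sub_pos.2 hxE).ne', (sub_pos.2 (hxE.trans hEEL)).ne']
    ring
  constructor
  · calc (∫ y in E..EL, η / (Real.pi * ((x - y) ^ 2 + η ^ 2)))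
        ≤ Real.pi⁻¹ * η * ((E - x)⁻¹ - (EL - x)⁻¹) :=
          integral_cauchy_kernel_le hη hEEL.le fun h => (h.1.trans_lt hxE).false
      _ = Real.pi⁻¹ * η * (EL - E) / ((EL - x) * (E - x)) := by rw [hinv, mul_div_assoc]
  · have h := mul_sub_div_mul_le_min (sub_pos.2 hxE) (sub_le_sub_right hEEL.le x) hη.le
    rw [sub_sub_sub_cancel_right] at h
    rw [mul_assoc, mul_div_assoc]
    exact mul_le_mul_of_nonneg_left h (inv_nonneg.2 Real.pi_pos.le)
end
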